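/- Let w be a formal power series over a ℚ-algebra with invertible constant term, m a positive integer, and k ≥ 1. Then the coefficient of x^0 in the formal Laurent series x·d/dx(w(x)^{m+1}/x^k) equals −k·Σ_{j=0}^{k} a_j·c_{k−j} + (m+1)·Σ_{j=1}^{k} j·a_j·c_{k−j}, where a_j = [x^j]w and c_j = [x^j]w^m; in particular this expression is zero. -/

import Mathlib

open PowerSeries HahnSeries Finset

/-- The formal derivative of a Laurent series. -/
noncomputable def laurentDeriv {R : Type*} [CommRing R] (f : LaurentSeries R) :
    LaurentSeries R where
  coeff n := (n + 1) • f.coeff (n + 1)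
  isPWO_support' := by
    apply Set.IsPWO.mono (f.isPWO_support'.image_of_monotone
      (f := fun n : ℤ => n - 1) (fun x y h => by simpa using h))
    intro n hn
    refine ⟨n + 1, ?_, by ring⟩
    simp only [Function.mem_support] at hn ⊢
    intro h
    simp [h] at hn

/-! The constant term of `x · f'` vanishes because a derivative has no `x^{-1}` coefficient. The
right-hand side is `(m+1) [x^k] ((x w') · w^m) - k [x^k] w^{m+1}`, which vanishes because
`x · d/dx` multiplies `[x^k]` by `k` and `x · (w^{m+1})' = (m+1) · (x w') · w^m`. -/

section

variable {R : Type*} [CommRing R]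

theorem coeff_laurentDeriv (f : LaurentSeries R) (n : ℤ) :
    (laurentDeriv f).coeff n = (n + 1) • f.coeff (n + 1) :=
  rfl

theorem coeff_zero_single_one_mul_laurentDeriv (f : LaurentSeries R) :
    (single (1 : ℤ) (1 : R) * laurentDeriv f).coeff 0 = 0 := by
  rw [show (0 : ℤ) = -1 + 1 by norm_num, coeff_single_mul_add, one_mul, coeff_laurentDeriv,
    neg_add_cancel, zero_smul]

namespace PowerSeries

theorem coeff_mul_eq_sum_Icc (φ ψ : R⟦X⟧) (k : ℕ) :
    coeff k (φ * ψ) = ∑ j ∈ Icc 0 k, coeff j φ * coeff (k - j) ψ := by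
  rw [coeff_mul, Nat.sum_antidiagonal_eq_sum_range_succ_mk, Nat.range_succ_eq_Icc_zero]

theorem coeff_X_mul_derivative (f : R⟦X⟧) (k : ℕ) :
    coeff k (X * d⁄dX R f) = k * coeff k f := by
  cases k with
  | zero => simp
  | succ n => rw [coeff_succ_X_mul, coeff_derivative, mul_comm, Nat.cast_succ]

theorem X_mul_derivative_pow_succ (w : R⟦X⟧) (m : ℕ) :
    X * d⁄dX R (w ^ (m + 1)) = C ((m : R) + 1) * (X * d⁄dX R w * w ^ m) := by
  rw [Derivation.leibniz_pow, nsmul_eq_mul, smul_eq_mul, Nat.add_sub_cancel, map_add, map_one,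
    map_natCast, Nat.cast_succ]
  ring

theorem natCast_mul_coeff_pow_succ (w : R⟦X⟧) (m k : ℕ) :
    (k : R) * coeff k (w ^ (m + 1)) =
      ((m : R) + 1) * ∑ j ∈ Icc 1 k, (j : R) * coeff j w * coeff (k - j) (w ^ m) := by
  have hsum : ∑ j ∈ Icc 0 k, (j : R) * coeff j w * coeff (k - j) (w ^ m) =
      ∑ j ∈ Icc 1 k, (j : R) * coeff j w * coeff (k - j) (w ^ m) := by
    rw [Icc_eq_cons_Ioc (Nat.zero_le k), sum_cons, Nat.cast_zero, zero_mul, zero_mul, zero_add,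
      ← Icc_add_one_left_eq_Ioc, zero_add]
  rw [← coeff_X_mul_derivative, X_mul_derivative_pow_succ, coeff_C_mul, coeff_mul_eq_sum_Icc,
    ← hsum]
  simp only [coeff_X_mul_derivative]

end PowerSeries

end

theorem zeilberger_identity_general {R : Type*} [CommRing R]
    (w : PowerSeries R)
    (m : ℕ) (k : ℕ)
    (a c : ℕ → R) (ha : ∀ j, a j = PowerSeries.coeff (R := R) j w)
    (hc : ∀ j, c j = PowerSeries.coeff (R := R) j (w ^ m)) :
    ((HahnSeries.single (1 : ℤ) (1 : R)) *
        laurentDeriv ((HahnSeries.single (-(k : ℤ)) (1 : R)) *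
          HahnSeries.ofPowerSeries ℤ R (w ^ (m + 1)))).coeff 0 =
      -(k : R) * ∑ j ∈ Finset.Icc 0 k, a j * c (k - j) +
        ((m : R) + 1) * ∑ j ∈ Finset.Icc 1 k, (j : R) * a j * c (k - j) ∧
    ((HahnSeries.single (1 : ℤ) (1 : R)) *
        laurentDeriv ((HahnSeries.single (-(k : ℤ)) (1 : R)) *
          HahnSeries.ofPowerSeries ℤ R (w ^ (m + 1)))).coeff 0 = 0 := by
  refine ⟨?_, coeff_zero_single_one_mul_laurentDeriv _⟩
  simp only [coeff_zero_single_one_mul_laurentDeriv, ha, hc]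
  rw [← coeff_mul_eq_sum_Icc, ← pow_succ', ← natCast_mul_coeff_pow_succ]
  ring

theorem zeilberger_identity {R : Type*} [CommRing R] [Algebra ℚ R]
    (w : PowerSeries R) (hunit : IsUnit (PowerSeries.coeff (R := R) 0 w))
    (m : ℕ) (hm : 0 < m) (k : ℕ) (hk : 1 ≤ k)
    (a c : ℕ → R) (ha : ∀ j, a j = PowerSeries.coeff (R := R) j w)
    (hc : ∀ j, c j = PowerSeries.coeff (R := R) j (w ^ m)) :
    ((HahnSeries.single (1 : ℤ) (1 : R)) *
        laurentDeriv ((HahnSeries.single (-(k : ℤ)) (1 : R)) *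
          HahnSeries.ofPowerSeries ℤ R (w ^ (m + 1)))).coeff 0 =
      -(k : R) * ∑ j ∈ Finset.Icc 0 k, a j * c (k - j) +
        ((m : R) + 1) * ∑ j ∈ Finset.Icc 1 k, (j : R) * a j * c (k - j) ∧
    ((HahnSeries.single (1 : ℤ) (1 : R)) *
        laurentDeriv ((HahnSeries.single (-(k : ℤ)) (1 : R)) *
          HahnSeries.ofPowerSeries ℤ R (w ^ (m + 1)))).coeff 0 = 0 :=
  zeilberger_identity_general w m k a c ha hc
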